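/- Let κ be a regular uncountable cardinal and T, U be κ-trees. Suppose C ⊆ κ is club and T↾C and U↾C are isomorphic. Then for every limit point δ of C, level δ of T is closed if and only if level δ of U is closed. -/

import Mathlib

/-!
An isomorphism between `T ↾ C` and `U ↾ C` preserves heights: by induction on the height, the
levels in `C` below a node `x` and below its image are the same, and a level in `C` is determined
by the levels of `C` below it. Since `δ` is a limit point of the club `C`, it lies in `C`, and
closedness of level `δ` can be read off `T ↾ C`: every cofinal branch of `T ↾ δ` is bounded as
soon as its nodes at levels in `C` are, and every chain through exactly the levels `C ∩ δ` is
cofinal in the branch it generates downwards.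
-/

universe u

/-- A set-theoretic tree: a strict partial order in which the set of predecessors
of any node is well-ordered. -/
structure STree (α : Type u) where
  lt : α → α → Prop
  irrefl : ∀ x, ¬ lt x x
  trans : ∀ {x y z}, lt x y → lt y z → lt x z
  wo : ∀ x : α, IsWellOrder {y // lt y x} (fun a b => lt a.1 b.1)

namespace STree

variable {α β : Type u}

/-- The height of a node: the order type of its set of predecessors. -/
noncomputable def ht (T : STree α) (x : α) : Ordinal :=
  @Ordinal.type {y // T.lt y x} (fun a b => T.lt a.1 b.1) (T.wo x)

/-- The reflexive closure of the tree order. -/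
def le (T : STree α) (x y : α) : Prop := T.lt x y ∨ x = y

/-- `T` is a `κ`-tree: height `κ` and all levels of size `< κ`. -/
def IsKTree (T : STree α) (κ : Cardinal) : Prop :=
  (∀ x, T.ht x < κ.ord) ∧ (∀ γ < κ.ord, ∃ x, T.ht x = γ) ∧
    ∀ γ : Ordinal, Cardinal.mk {x // T.ht x = γ} < κ

/-- `T` is a normal `κ`-tree. -/
def IsNormalTree (T : STree α) (κ : Cardinal) : Prop :=
  (∀ x, ∀ γ, T.ht x < γ → γ < κ.ord → ∃ y, T.lt x y ∧ T.ht y = γ) ∧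
  (∀ x y, x ≠ y → T.ht x = T.ht y → Order.IsSuccLimit (T.ht x) →
    ∃ z, T.lt z x ∧ ¬ T.lt z y) ∧
  (∀ x, ∃ y z, T.lt x y ∧ T.lt x z ∧ ¬ T.le y z ∧ ¬ T.le z y)

/-- A chain in `T`: a linearly ordered subset. -/
def IsChain (T : STree α) (b : Set α) : Prop :=
  ∀ x ∈ b, ∀ y ∈ b, T.le x y ∨ T.le y x

/-- `T` is countably closed: every countable chain has an upper bound. -/
def CClosed (T : STree α) : Prop :=
  ∀ b : Set α, b.Countable → T.IsChain b → ∃ z, ∀ x ∈ b, T.le x z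

/-- `T` is a `κ`-Aronszajn tree: a `κ`-tree with no cofinal chain. -/
def Aronszajn (T : STree α) (κ : Cardinal) : Prop :=
  T.IsKTree κ ∧ ¬ ∃ b : Set α, T.IsChain b ∧ ∀ γ < κ.ord, ∃ x ∈ b, T.ht x = γ

end STree

/-- `C` is club in `κo`: a subset of `κo` which is unbounded and closed. -/
def ClubIn (C : Set Ordinal) (κo : Ordinal) : Prop :=
  C ⊆ Set.Iio κo ∧ (∀ γ < κo, ∃ δ ∈ C, γ ≤ δ) ∧
    ∀ δ : Ordinal, δ < κo → δ ≠ 0 → (∀ γ < δ, ∃ b ∈ C, γ < b ∧ b < δ) → δ ∈ C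

/-- The restricted trees `T ↾ A` and `U ↾ A` are isomorphic. -/
def RestrIso {α β : Type u} (T : STree α) (U : STree β) (A : Set Ordinal) : Prop :=
  ∃ e : {x : α // T.ht x ∈ A} ≃ {y : β // U.ht y ∈ A},
    ∀ a b, T.lt a.1 b.1 ↔ U.lt (e a).1 (e b).1

/-- Level `δ` of `T` is closed: every cofinal branch of `T ↾ δ` has an upper bound. -/
def LevelClosed {α : Type u} (T : STree α) (δ : Ordinal) : Prop :=
  ∀ b : Set α, (∀ x ∈ b, T.ht x < δ) → T.IsChain b →
    (∀ γ < δ, ∃ x ∈ b, T.ht x = γ) → ∃ z, ∀ x ∈ b, T.lt x z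

open Set

theorem eq_of_inter_Iio_eq {X : Type*} [LinearOrder X] {s : Set X} {a b : X} (ha : a ∈ s)
    (hb : b ∈ s) (h : s ∩ Iio a = s ∩ Iio b) : a = b := by
  by_contra hne
  rcases lt_or_gt_of_ne hne with hab | hba
  · exact lt_irrefl a (show a ∈ s ∩ Iio a from h ▸ ⟨ha, hab⟩).2
  · exact lt_irrefl b (show b ∈ s ∩ Iio b from h ▸ ⟨hb, hba⟩).2

namespace STree

variable {α β : Type u}

section Basic

variable (T : STree α)

theorem ht_eq_typein {x : α} (z : {y // T.lt y x}) :
    T.ht z.1 = @Ordinal.typein _ (fun a b : {y // T.lt y x} => T.lt a.1 b.1) (T.wo x) z := by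
  let _ := T.wo x
  let _ := T.wo z.1
  rw [← Ordinal.type_subrel]
  exact Ordinal.type_eq.2 ⟨{ toFun := fun w => ⟨⟨w.1, T.trans w.2 z.2⟩, w.2⟩
                             invFun := fun v => ⟨v.1.1, v.2⟩
                             left_inv := fun _ => rfl
                             right_inv := fun _ => rfl
                             map_rel_iff' := Iff.rfl }⟩

theorem ht_lt_of_lt {x y : α} (h : T.lt x y) : T.ht x < T.ht y := by
  let _ := T.wo y
  rw [T.ht_eq_typein ⟨x, h⟩]
  exact Ordinal.typein_lt_type _ _

theorem ht_le_of_le {x y : α} (h : T.le x y) : T.ht x ≤ T.ht y := by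
  rcases h with h | rfl
  · exact (T.ht_lt_of_lt h).le
  · exact le_rfl

theorem exists_lt_ht_eq {x : α} {γ : Ordinal} (h : γ < T.ht x) :
    ∃ z, T.lt z x ∧ T.ht z = γ := by
  let _ := T.wo x
  obtain ⟨z, hz⟩ := Ordinal.typein_surj (fun a b : {y // T.lt y x} => T.lt a.1 b.1) h
  exact ⟨z.1, z.2, (T.ht_eq_typein z).trans hz⟩

theorem trichotomous_of_lt {x y z : α} (hx : T.lt x z) (hy : T.lt y z) :
    T.lt x y ∨ x = y ∨ T.lt y x := by
  let _ := T.wo z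
  rcases trichotomous_of (fun a b : {w // T.lt w z} => T.lt a.1 b.1) ⟨x, hx⟩ ⟨y, hy⟩ with
    h | h | h
  · exact Or.inl h
  · exact Or.inr (Or.inl (congrArg Subtype.val h))
  · exact Or.inr (Or.inr h)

theorem le_trans {x y z : α} (hxy : T.le x y) (hyz : T.le y z) : T.le x z := by
  rcases hxy with hxy | rfl
  · rcases hyz with hyz | rfl
    · exact Or.inl (T.trans hxy hyz)
    · exact Or.inl hxy
  · exact hyz

theorem le_total_of_le {x y z : α} (hx : T.le x z) (hy : T.le y z) : T.le x y ∨ T.le y x := by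
  rcases hx with hx | rfl
  · rcases hy with hy | rfl
    · rcases T.trichotomous_of_lt hx hy with h | h | h
      · exact Or.inl (Or.inl h)
      · exact Or.inl (Or.inr h)
      · exact Or.inr (Or.inl h)
    · exact Or.inl (Or.inl hx)
  · exact Or.inr hy

theorem lt_of_lt_of_ht_lt {x y z : α} (hx : T.lt x z) (hy : T.le y z) (h : T.ht x < T.ht y) :
    T.lt x y := by
  rcases T.le_total_of_le (Or.inl hx) hy with (hxy | rfl) | hyx
  · exact hxy
  · exact absurd h (lt_irrefl _)
  · exact absurd (T.ht_le_of_le hyx) h.not_ge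

theorem IsChain.lt_of_ht_lt {T : STree α} {b : Set α} (hb : T.IsChain b) {x y : α} (hx : x ∈ b)
    (hy : y ∈ b) (h : T.ht x < T.ht y) : T.lt x y := by
  rcases hb x hx y hy with (hxy | rfl) | hyx
  · exact hxy
  · exact absurd h (lt_irrefl _)
  · exact absurd (T.ht_le_of_le hyx) h.not_ge

theorem IsChain.setOf_le {T : STree α} {b : Set α} (hb : T.IsChain b) :
    T.IsChain {x | ∃ y ∈ b, T.le x y} := by
  rintro x ⟨y, hy, hxy⟩ x' ⟨y', hy', hxy'⟩
  rcases hb y hy y' hy' with h | h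
  · exact T.le_total_of_le (T.le_trans hxy h) hxy'
  · exact T.le_total_of_le hxy (T.le_trans hxy' h)

theorem exists_ht_eq_bound {b : Set α} {δ : Ordinal} {z : α} (hbδ : ∀ x ∈ b, T.ht x < δ)
    (hcof : ∀ γ < δ, ∃ x ∈ b, γ ≤ T.ht x) (hz : ∀ x ∈ b, T.lt x z) :
    ∃ z', T.ht z' = δ ∧ ∀ x ∈ b, T.lt x z' := by
  have hδz : δ ≤ T.ht z := not_lt.1 fun h =>
    let ⟨x, hx, hzx⟩ := hcof _ h
    (T.ht_lt_of_lt (hz x hx)).not_ge hzx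
  rcases hδz.eq_or_lt with h | h
  · exact ⟨z, h.symm, hz⟩
  · obtain ⟨z', hz', rfl⟩ := T.exists_lt_ht_eq h
    exact ⟨z', rfl, fun x hx => T.lt_of_lt_of_ht_lt (hz x hx) (Or.inl hz') (hbδ x hx)⟩

end Basic

/-- For `S = C ∩ Iio δ` with `δ ∈ C`, this property only involves `T ↾ C`. -/
def ChainsBoundedAt (T : STree α) (S : Set Ordinal) (δ : Ordinal) : Prop :=
  ∀ b : Set α, T.IsChain b → T.ht '' b = S → ∃ z, T.ht z = δ ∧ ∀ x ∈ b, T.lt x z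

section LimitPoint

variable (T : STree α) {C : Set Ordinal} {δ : Ordinal}

theorem chainsBoundedAt_of_levelClosed (hδ : ∀ γ < δ, ∃ c ∈ C, γ < c ∧ c < δ)
    (hT : LevelClosed T δ) : T.ChainsBoundedAt (C ∩ Iio δ) δ := by
  intro a ha haC
  have hlt : ∀ x ∈ a, T.ht x < δ := fun x hx =>
    (show T.ht x ∈ C ∩ Iio δ from haC ▸ mem_image_of_mem T.ht hx).2
  have hcof : ∀ γ < δ, ∃ y ∈ a, γ < T.ht y := by
    intro γ hγ
    obtain ⟨c, hc, hγc, hcδ⟩ := hδ γ hγ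
    obtain ⟨y, hy, rfl⟩ : c ∈ T.ht '' a := haC ▸ ⟨hc, hcδ⟩
    exact ⟨y, hy, hγc⟩
  obtain ⟨z, hz⟩ := hT {x | ∃ y ∈ a, T.le x y}
    (fun x ⟨y, hy, hxy⟩ => (T.ht_le_of_le hxy).trans_lt (hlt y hy)) ha.setOf_le
    (fun γ hγ => by
      obtain ⟨y, hy, hγy⟩ := hcof γ hγ
      obtain ⟨x, hxy, rfl⟩ := T.exists_lt_ht_eq hγy
      exact ⟨x, ⟨y, hy, Or.inl hxy⟩, rfl⟩)
  exact T.exists_ht_eq_bound hlt (fun γ hγ => (hcof γ hγ).imp fun _ h => ⟨h.1, h.2.le⟩)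
    (fun x hx => hz x ⟨x, hx, Or.inr rfl⟩)

theorem levelClosed_of_chainsBoundedAt (hδ : ∀ γ < δ, ∃ c ∈ C, γ < c ∧ c < δ)
    (hT : T.ChainsBoundedAt (C ∩ Iio δ) δ) : LevelClosed T δ := by
  intro b hbδ hb hlev
  have hbC : T.ht '' (b ∩ T.ht ⁻¹' C) = C ∩ Iio δ := by
    ext γ
    constructor
    · rintro ⟨x, ⟨hx, hxC⟩, rfl⟩
      exact ⟨hxC, hbδ x hx⟩
    · rintro ⟨hγC, hγ⟩
      obtain ⟨x, hx, rfl⟩ := hlev γ hγ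
      exact ⟨x, ⟨hx, hγC⟩, rfl⟩
  obtain ⟨z, -, hz⟩ := hT _ (fun x hx y hy => hb x hx.1 y hy.1) hbC
  refine ⟨z, fun x hx => ?_⟩
  obtain ⟨c, hc, hxc, hcδ⟩ := hδ _ (hbδ x hx)
  obtain ⟨y, hy, rfl⟩ := hlev c hcδ
  exact T.trans (hb.lt_of_ht_lt hx hy hxc) (hz y ⟨hy, hc⟩)

theorem levelClosed_iff_chainsBoundedAt (hδ : ∀ γ < δ, ∃ c ∈ C, γ < c ∧ c < δ) :
    LevelClosed T δ ↔ T.ChainsBoundedAt (C ∩ Iio δ) δ :=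
  ⟨T.chainsBoundedAt_of_levelClosed hδ, T.levelClosed_of_chainsBoundedAt hδ⟩

end LimitPoint

section RestrIso

variable {T : STree α} {U : STree β} {C : Set Ordinal}

theorem ht_apply_eq_of_lt_iff (e : {x : α // T.ht x ∈ C} ≃ {y : β // U.ht y ∈ C})
    (he : ∀ a b, T.lt a.1 b.1 ↔ U.lt (e a).1 (e b).1) (x : {x : α // T.ht x ∈ C}) :
    U.ht (e x).1 = T.ht x.1 := by
  induction hx : T.ht x.1 using WellFoundedLT.induction generalizing x with
  | _ o ih =>
  subst hx
  refine eq_of_inter_Iio_eq (e x).2 x.2 (Set.ext fun γ => ⟨?_, ?_⟩)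
  · rintro ⟨hγC, hγ⟩
    obtain ⟨w, hw, rfl⟩ := U.exists_lt_ht_eq hγ
    obtain ⟨z, hz⟩ := e.surjective ⟨w, hγC⟩
    have hzx : T.lt z.1 x.1 := (he z x).2 (hz ▸ hw)
    have hzw : U.ht w = T.ht z.1 := by
      simpa [hz] using ih _ (T.ht_lt_of_lt hzx) z rfl
    exact ⟨hγC, hzw ▸ T.ht_lt_of_lt hzx⟩
  · rintro ⟨hγC, hγ⟩
    obtain ⟨z, hz, rfl⟩ := T.exists_lt_ht_eq hγ
    refine ⟨hγC, ?_⟩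
    rw [← ih _ hγ ⟨z, hγC⟩ rfl]
    exact U.ht_lt_of_lt ((he ⟨z, hγC⟩ x).1 hz)

theorem _root_.RestrIso.symm (h : RestrIso T U C) : RestrIso U T C :=
  let ⟨e, he⟩ := h
  ⟨e.symm, fun a b => by simpa using (he (e.symm a) (e.symm b)).symm⟩

theorem ChainsBoundedAt.of_restrIso {S : Set Ordinal} {δ : Ordinal} (h : RestrIso T U C)
    (hS : S ⊆ C) (hδ : δ ∈ C) (hU : U.ChainsBoundedAt S δ) : T.ChainsBoundedAt S δ := by
  obtain ⟨e, he⟩ := h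
  have hle : ∀ a b, T.le a.1 b.1 → U.le (e a).1 (e b).1 := by
    rintro a b (hab | hab)
    · exact Or.inl ((he a b).1 hab)
    · exact Or.inr (congrArg _ (congrArg e (Subtype.ext hab)))
  intro a ha haS
  have haC : ∀ x ∈ a, T.ht x ∈ C := fun x hx => hS (haS ▸ mem_image_of_mem T.ht hx)
  set a' : Set {x : α // T.ht x ∈ C} := Subtype.val ⁻¹' a
  have himage : U.ht '' ((fun x => (e x).1) '' a') = S := by
    rw [image_image, ← haS]
    ext γ
    simp only [ht_apply_eq_of_lt_iff e he, mem_image, mem_preimage, a', Subtype.exists]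
    exact ⟨fun ⟨x, _, hx, hγ⟩ => ⟨x, hx, hγ⟩, fun ⟨x, hx, hγ⟩ => ⟨x, haC x hx, hx, hγ⟩⟩
  obtain ⟨w, hw, hwb⟩ := hU _
    (by rintro _ ⟨x, hx, rfl⟩ _ ⟨y, hy, rfl⟩; exact (ha x hx y hy).imp (hle x y) (hle y x))
    himage
  have hwC : U.ht w ∈ C := hw ▸ hδ
  refine ⟨(e.symm ⟨w, hwC⟩).1, ?_, fun x hx => ?_⟩
  · simpa [hw] using (ht_apply_eq_of_lt_iff e he (e.symm ⟨w, hwC⟩)).symm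
  · refine (he ⟨x, haC x hx⟩ _).2 ?_
    simpa using hwb _ ⟨⟨x, haC x hx⟩, hx, rfl⟩

end RestrIso

end STree

theorem statement_2_general {α β : Type u} (κ : Cardinal)
    (T : STree α) (U : STree β)
    (C : Set Ordinal) (hC : ClubIn C κ.ord)
    (hiso : RestrIso T U C)
    (δ : Ordinal) (hδ : δ < κ.ord) (hδ0 : δ ≠ 0)
    (hδlim : ∀ γ < δ, ∃ b ∈ C, γ < b ∧ b < δ) :
    LevelClosed T δ ↔ LevelClosed U δ := by
  have hδC : δ ∈ C := hC.2.2 δ hδ hδ0 hδlim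
  rw [T.levelClosed_iff_chainsBoundedAt hδlim, U.levelClosed_iff_chainsBoundedAt hδlim]
  exact ⟨.of_restrIso hiso.symm inter_subset_left hδC, .of_restrIso hiso inter_subset_left hδC⟩

theorem statement_2 {α β : Type u} (κ : Cardinal) (hreg : κ.IsRegular)
    (hunc : Cardinal.aleph0 < κ)
    (T : STree α) (U : STree β)
    (hT : T.IsKTree κ) (hU : U.IsKTree κ)
    (C : Set Ordinal) (hC : ClubIn C κ.ord)
    (hiso : RestrIso T U C)
    (δ : Ordinal) (hδ : δ < κ.ord) (hδ0 : δ ≠ 0)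
    (hδlim : ∀ γ < δ, ∃ b ∈ C, γ < b ∧ b < δ) :
    LevelClosed T δ ↔ LevelClosed U δ :=
  statement_2_general κ T U C hC hiso δ hδ hδ0 hδlim
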